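/- Let 𝒜 be an abelian category and V a tilting object. Then V is Ext^1-universal: for every object A there exists a universal extension 0 → A → T → V^{(I)} → 0. Moreover, for any object A and any universal extension 0 → A → T → V^{(I)} → 0 of V by A, the middle term T belongs to V^{⊥1} = Gen(V). -/

import Mathlib

/-!
Common definitions for formalizing results of "Tilting preenvelopes and cotilting
precovers in general Abelian categories" (Parra–Saorín–Virili).

Conventions:
* Full subcategories of an abelian category `C` are encoded as `Set C`.
* "Sets" (index sets of families, coproducts, …) are encoded as types in the universe `v`
  of the morphisms of `C`.
* `Ext¹(X,Y) = 0` is encoded via the splitting of all short exact sequences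
  `0 → Y → E → X → 0` (equivalently, the vanishing of the Yoneda Ext group).
* Relative (`…In B`) notions encode the corresponding notion computed inside the
  full (abelian exact) subcategory determined by `B : Set C`; the ambient case is
  `B = Set.univ`.
* Coproducts are not assumed to exist: a coproduct of a family existing in the
  (sub)category is encoded by a cocone with the universal property (`IsCoproductIn`).
-/

open CategoryTheory CategoryTheory.Limits

universe w v u

attribute [local instance] CategoryTheory.Abelian.hasFiniteBiproducts

namespace Paper

variable {C : Type u} [Category.{v} C] [Abelian C]

/-- `(i, p)` is a short exact sequence `0 ⟶ A ⟶ E ⟶ B ⟶ 0` in `C`. -/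
def IsShortExact {A E B : C} (i : A ⟶ E) (p : E ⟶ B) : Prop :=
  ∃ hw : i ≫ p = 0, (ShortComplex.mk i p hw).ShortExact

/-- `Q`, together with the injections `ι`, is the coproduct of the family `f`
inside the full subcategory determined by `B`. -/
structure IsCoproductIn (B : Set C) {I : Type v} (f : I → C) (Q : C)
    (ι : ∀ i, f i ⟶ Q) : Prop where
  mem : ∀ i, f i ∈ B
  memQ : Q ∈ B
  desc : ∀ Z ∈ B, ∀ g : (∀ i, f i ⟶ Z), ∃! h : Q ⟶ Z, ∀ i, ι i ≫ h = g i

/-- `Ext¹(X, Y) = 0`, computed in the full subcategory determined by `B`: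
every short exact sequence `0 → Y → E → X → 0` with `E ∈ B` splits. -/
def Ext1ZeroIn (B : Set C) (X Y : C) : Prop :=
  ∀ E ∈ B, ∀ (i : Y ⟶ E) (p : E ⟶ X), IsShortExact i p → ∃ r : E ⟶ Y, i ≫ r = 𝟙 Y

/-- `Ext¹(X, Y) = 0` in the ambient abelian category. -/
def Ext1Zero (X Y : C) : Prop := Ext1ZeroIn Set.univ X Y

/-- `V^{⊥₁}`, computed in (the full subcategory determined by) `B`. -/
def rightPerp (B : Set C) (V : C) : Set C := {A ∈ B | Ext1ZeroIn B V A}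

/-- `^{⊥₁}T`, computed in `B`. -/
def leftPerpSet (B T : Set C) : Set C := {A ∈ B | ∀ X ∈ T, Ext1ZeroIn B A X}

/-- `T^{⊥₁}`, computed in `B`. -/
def rightPerpSet (B T : Set C) : Set C := {A ∈ B | ∀ X ∈ T, Ext1ZeroIn B X A}

/-- `Sub(X)` relative to `B`: objects of `B` admitting a monomorphism into an object of `X`. -/
def subIn (B X : Set C) : Set C := {A ∈ B | ∃ T ∈ X, ∃ f : A ⟶ T, Mono f}

/-- `Quot(X)` relative to `B`: objects of `B` which are epimorphic images of objects of `X`. -/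
def quotIn (B X : Set C) : Set C := {A ∈ B | ∃ T ∈ X, ∃ f : T ⟶ A, Epi f}

/-- `(T, F)` is a torsion pair in (the full subcategory determined by) `B`. -/
structure IsTorsionPairIn (B T F : Set C) : Prop where
  eqF : F = {A ∈ B | ∀ X ∈ T, ∀ f : X ⟶ A, f = 0}
  eqT : T = {A ∈ B | ∀ Y ∈ F, ∀ f : A ⟶ Y, f = 0}
  seq : ∀ A ∈ B, ∃ (X Y : C) (i : X ⟶ A) (p : A ⟶ Y), X ∈ T ∧ Y ∈ F ∧ IsShortExact i p

/-- `T` is a torsion class in `B`. -/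
def IsTorsionClassIn (B T : Set C) : Prop := ∃ F, IsTorsionPairIn B T F

/-- `F` is a torsion-free class in `B`. -/
def IsTorsionFreeClassIn (B F : Set C) : Prop := ∃ T, IsTorsionPairIn B T F

/-- `φ : M ⟶ X` is a `T`-preenvelope. -/
structure IsPreenvelope (T : Set C) {M X : C} (φ : M ⟶ X) : Prop where
  mem : X ∈ T
  fac : ∀ T' ∈ T, ∀ g : M ⟶ T', ∃ h : X ⟶ T', φ ≫ h = g

/-- `φ` is a semi-special `T`-preenvelope (relative to `B`):
a `T`-preenvelope whose cokernel lies in `^{⊥₁}T` (computed in `B`). -/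
def IsSemiSpecialPreenvelopeIn (B T : Set C) {M X : C} (φ : M ⟶ X) : Prop :=
  IsPreenvelope T φ ∧ cokernel φ ∈ leftPerpSet B T

/-- `φ` is a special `T`-preenvelope (relative to `B`). -/
def IsSpecialPreenvelopeIn (B T : Set C) {M X : C} (φ : M ⟶ X) : Prop :=
  Mono φ ∧ IsSemiSpecialPreenvelopeIn B T φ

/-- `T` is preenveloping in `B`. -/
def PreenvelopingIn (B T : Set C) : Prop :=
  ∀ M ∈ B, ∃ (X : C) (φ : M ⟶ X), IsPreenvelope T φ

/-- `T` is semi-special preenveloping in `B`. -/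
def SemiSpecialPreenvelopingIn (B T : Set C) : Prop :=
  ∀ M ∈ B, ∃ (X : C) (φ : M ⟶ X), IsSemiSpecialPreenvelopeIn B T φ

/-- `T` is special preenveloping in `B`. -/
def SpecialPreenvelopingIn (B T : Set C) : Prop :=
  ∀ M ∈ B, ∃ (X : C) (φ : M ⟶ X), IsSpecialPreenvelopeIn B T φ

/-- `φ : X ⟶ M` is a `T`-precover. -/
structure IsPrecover (T : Set C) {X M : C} (φ : X ⟶ M) : Prop where
  mem : X ∈ T
  fac : ∀ T' ∈ T, ∀ g : T' ⟶ M, ∃ h : T' ⟶ X, h ≫ φ = g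

/-- `φ` is a semi-special `T`-precover (relative to `B`):
a `T`-precover whose kernel lies in `T^{⊥₁}` (computed in `B`). -/
def IsSemiSpecialPrecoverIn (B T : Set C) {X M : C} (φ : X ⟶ M) : Prop :=
  IsPrecover T φ ∧ kernel φ ∈ rightPerpSet B T

/-- `T` is precovering in `B`. -/
def PrecoveringIn (B T : Set C) : Prop :=
  ∀ M ∈ B, ∃ (X : C) (φ : X ⟶ M), IsPrecover T φ

/-- `T` is semi-special precovering in `B`. -/
def SemiSpecialPrecoveringIn (B T : Set C) : Prop :=
  ∀ M ∈ B, ∃ (X : C) (φ : X ⟶ M), IsSemiSpecialPrecoverIn B T φ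

/-- `Add(V)` relative to `B`: direct summands of coproducts (existing in `B`)
of copies of `V`. -/
def addIn (B : Set C) (V : C) : Set C :=
  {A ∈ B | ∃ (I : Type v) (Q : C) (ι : ∀ _ : I, V ⟶ Q),
     IsCoproductIn B (fun _ : I => V) Q ι ∧ ∃ (s : A ⟶ Q) (r : Q ⟶ A), s ≫ r = 𝟙 A}

/-- `Gen(V)` relative to `B`: quotients of objects of `Add(V)`. -/
def genIn (B : Set C) (V : C) : Set C :=
  {A ∈ B | ∃ X ∈ addIn B V, ∃ p : X ⟶ A, Epi p}

/-- `Pres(V)` relative to `B`: cokernels of morphisms between objects of `Add(V)`. -/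
def presIn (B : Set C) (V : C) : Set C :=
  {A ∈ B | ∃ X ∈ addIn B V, ∃ Y ∈ addIn B V,
     ∃ (f : X ⟶ Y) (c : Y ⟶ A) (hw : f ≫ c = 0), Epi c ∧ (ShortComplex.mk f c hw).Exact}

/-- `Ḡen(V) = Sub(Gen(V))` relative to `B`. -/
def barGenIn (B : Set C) (V : C) : Set C := subIn B (genIn B V)

/-- The class `X` is cogenerating in `B`. -/
def CogeneratingIn (B X : Set C) : Prop := ∀ A ∈ B, ∃ T ∈ X, ∃ f : A ⟶ T, Mono f

/-- The class `X` is generating in `B`. -/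
def GeneratingIn (B X : Set C) : Prop := ∀ A ∈ B, ∃ T ∈ X, ∃ f : T ⟶ A, Epi f

/-- `V` is a quasi-tilting object of (the full subcategory determined by) `B`:
`Gen(V)` is a torsion class and `Gen(V) = Pres(V) = Ḡen(V) ∩ V^{⊥₁}`. -/
def IsQuasiTiltingIn (B : Set C) (V : C) : Prop :=
  V ∈ B ∧ IsTorsionClassIn B (genIn B V) ∧ genIn B V = presIn B V ∧
    genIn B V = barGenIn B V ∩ rightPerp B V

/-- `V` is a tilting object of `B`: quasi-tilting with `Gen(V)` cogenerating. -/
def IsTiltingIn (B : Set C) (V : C) : Prop :=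
  IsQuasiTiltingIn B V ∧ CogeneratingIn B (genIn B V)

/-- `G` is an epi-generator of `B`: every object of `B` is an epimorphic image of a
coproduct (existing in `B`) of copies of `G`. -/
def IsEpiGeneratorIn (B : Set C) (G : C) : Prop :=
  G ∈ B ∧ ∀ A ∈ B, ∃ (I : Type v) (Q : C) (ι : ∀ _ : I, G ⟶ Q),
    IsCoproductIn B (fun _ : I => G) Q ι ∧ ∃ p : Q ⟶ A, Epi p

/-- `0 → A —u→ X → V^{(J)} → 0` is a universal extension of `V` by `A` (relative to `B`):
the right end of the sequence is a nonempty coproduct of copies of `V` existing in `B`,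
and the induced map `Ext¹(V,A) → Ext¹(V,X)` is zero (encoded: for every extension
`0 → A —i→ E → V → 0` with `E ∈ B`, its pushout along `u` splits, i.e. `u` extends
along `i`). -/
def IsUniversalExtensionIn (B : Set C) (V A X : C) (u : A ⟶ X) : Prop :=
  A ∈ B ∧ X ∈ B ∧
  (∃ (J : Type v) (_ : Nonempty J) (P : C) (κ : ∀ _ : J, V ⟶ P) (p : X ⟶ P),
     IsCoproductIn B (fun _ : J => V) P κ ∧ IsShortExact u p) ∧
  (∀ E ∈ B, ∀ (i : A ⟶ E) (q : E ⟶ V), IsShortExact i q → ∃ ψ : E ⟶ X, i ≫ ψ = u)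

/-- `V` is `Ext¹`-universal in `B`: universal extensions of `V` by every object exist. -/
def IsExt1UniversalIn (B : Set C) (V : C) : Prop :=
  ∀ A ∈ B, ∃ (X : C) (u : A ⟶ X), IsUniversalExtensionIn B V A X u

/-- `(X, Y)` is a cotorsion pair in (the full subcategory determined by) `B`. -/
def IsCotorsionPairIn (B X Y : Set C) : Prop :=
  Y = {A ∈ B | ∀ Z ∈ X, Ext1ZeroIn B Z A} ∧
  X = {A ∈ B | ∀ Z ∈ Y, Ext1ZeroIn B A Z}

/-- The pair `(X, Y)` is right complete in `B`: every `A ∈ B` admits a short exact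
sequence `0 → A → Y' → X' → 0` with `Y' ∈ Y`, `X' ∈ X`. -/
def RightCompleteIn (B X Y : Set C) : Prop :=
  ∀ A ∈ B, ∃ (Y' X' : C) (i : A ⟶ Y') (p : Y' ⟶ X'), Y' ∈ Y ∧ X' ∈ X ∧ IsShortExact i p

/-- The pair `(X, Y)` is left complete in `B`: every `A ∈ B` admits a short exact
sequence `0 → Y' → X' → A → 0` with `Y' ∈ Y`, `X' ∈ X`. -/
def LeftCompleteIn (B X Y : Set C) : Prop :=
  ∀ A ∈ B, ∃ (Y' X' : C) (i : Y' ⟶ X') (p : X' ⟶ A), Y' ∈ Y ∧ X' ∈ X ∧ IsShortExact i p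

/-- The full subcategory determined by `B` is reflective in `C`:
the (fully faithful) inclusion functor has a left adjoint. -/
def IsReflectiveSub (B : Set C) : Prop :=
  (ObjectProperty.ι (· ∈ B)).IsRightAdjoint

/-- The full subcategory determined by `B` is coreflective in `C`:
the inclusion functor has a right adjoint. -/
def IsCoreflectiveSub (B : Set C) : Prop :=
  (ObjectProperty.ι (· ∈ B)).IsLeftAdjoint

/-- `Ext²(V, A) = 0` (Yoneda `Ext²`): every `2`-fold extension
`0 → A —g→ X₁ —f→ X₀ —p→ V → 0` represents the trivial class, i.e. (by the standard
long-exact-sequence criterion) the extension `0 → A → X₁ → im f → 0` extends to an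
extension of `X₀` by `A`. -/
def Ext2Zero (V A : C) : Prop :=
  ∀ (X1 X0 : C) (g : A ⟶ X1) (f : X1 ⟶ X0) (p : X0 ⟶ V)
    (w1 : g ≫ f = 0) (w2 : f ≫ p = 0),
    Mono g → Epi p → (ShortComplex.mk g f w1).Exact → (ShortComplex.mk f p w2).Exact →
    ∃ (Y : C) (a : A ⟶ Y) (b : Y ⟶ X0), IsShortExact a b ∧
      ∃ φ : X1 ⟶ Y, g ≫ φ = a ∧ φ ≫ b = f

/-- `V` has projective dimension at most `1`: `Ext²(V, A) = 0` for every `A`. -/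
def ProjDimLE1 (V : C) : Prop := ∀ A : C, Ext2Zero V A

/-- The "elements" of the (possibly large) Yoneda `Ext¹(X, Y)`: short exact sequences
`0 → Y → E → X → 0`. -/
def ExtElem (X Y : C) : Type (max u v) :=
  Σ' (E : C) (i : Y ⟶ E) (p : E ⟶ X), IsShortExact i p

/-- Yoneda equivalence of extensions. -/
def extRel (X Y : C) : ExtElem X Y → ExtElem X Y → Prop :=
  fun e₁ e₂ => ∃ φ : e₁.1 ⟶ e₂.1, e₁.2.1 ≫ φ = e₂.2.1 ∧ φ ≫ e₂.2.2.1 = e₁.2.2.1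

/-- The (possibly large) Yoneda `Ext¹(X, Y)`, as the quotient of the collection
of extensions by Yoneda equivalence. -/
def ExtClass (X Y : C) : Type (max u v) := Quot (extRel X Y)

/-- `Ext¹(A, B)` is a finitely generated (right) `End(A)`-module: there are `n : ℕ` and a
short exact sequence `0 → B → X → A^n → 0` whose connecting map
`Hom(A, A^n) → Ext¹(A, B)` is surjective, i.e. every extension of `A` by `B` is a pullback
of the fixed one along some `h : A ⟶ A^n`. -/
def Ext1FGEnd (A B : C) : Prop :=
  ∃ (n : ℕ) (X : C) (u : B ⟶ X) (p : X ⟶ ⨁ (fun _ : Fin n => A)),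
    IsShortExact u p ∧
    ∀ (E : C) (i : B ⟶ E) (q : E ⟶ A), IsShortExact i q →
      ∃ (h : A ⟶ ⨁ (fun _ : Fin n => A)) (φ : E ⟶ X), i ≫ φ = u ∧ φ ≫ p = q ≫ h

/-- `∐¹_I f = 0`: for every `I`-indexed family of short exact sequences
`0 → Xᵢ → Yᵢ → fᵢ → 0`, the induced morphism `∐ Xᵢ → ∐ Yᵢ` between (existing)
coproducts is a monomorphism. -/
def CoprodDerivedZeroFam {I : Type v} (f : I → C) : Prop :=
  ∀ (X Y : I → C) (u : ∀ i, X i ⟶ Y i) (p : ∀ i, Y i ⟶ f i),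
    (∀ i, IsShortExact (u i) (p i)) →
    ∀ (QX QY : C) (ιX : ∀ i, X i ⟶ QX) (ιY : ∀ i, Y i ⟶ QY) (uu : QX ⟶ QY),
      IsCoproductIn Set.univ X QX ιX → IsCoproductIn Set.univ Y QY ιY →
      (∀ i, ιX i ≫ uu = u i ≫ ιY i) → Mono uu

/-- `∐¹_I V = 0` for the constant family at `V`. -/
def CoprodDerivedZero (I : Type v) (V : C) : Prop :=
  CoprodDerivedZeroFam (fun _ : I => V)

/-- Witness that the category `D` is `Hom`-finite: a commutative ring `R` together with an
`R`-linear structure on `D` for which all `Hom`-modules are finitely generated. -/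
structure HomFiniteStruct (D : Type u) [Category.{v} D] [Preadditive D] :
    Type (max u (v + 1)) where
  R : Type v
  [commRing : CommRing R]
  [linear : CategoryTheory.Linear R D]
  homFinite : ∀ A B : D, Module.Finite R (A ⟶ B)

/-- The category `D` is `Hom`-finite. -/
def HomFinite (D : Type u) [Category.{v} D] [Preadditive D] : Prop :=
  Nonempty (HomFiniteStruct D)

/-- `Q`, with injections `ι`, is a coproduct of the family `f` in an arbitrary category. -/
def IsCoproductCocone {D : Type u} [Category.{v} D] {I : Type w} (f : I → D) (Q : D)
    (ι : ∀ i, f i ⟶ Q) : Prop :=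
  ∀ (Z : D) (g : ∀ i, f i ⟶ Z), ∃! h : Q ⟶ Z, ∀ i, ι i ≫ h = g i

/-- The category `D` satisfies (Ab.4): it has all (small) coproducts, and coproducts
of monomorphisms are monomorphisms (for abelian categories, the latter is equivalent to
the exactness of coproducts). -/
def Ab4Type (D : Type u) [Category.{v} D] : Prop :=
  HasCoproducts.{v} D ∧
  ∀ (I : Type v) (X Y : I → D) (u : ∀ i, X i ⟶ Y i), (∀ i, Mono (u i)) →
    ∀ (QX QY : D) (ιX : ∀ i, X i ⟶ QX) (ιY : ∀ i, Y i ⟶ QY) (uu : QX ⟶ QY),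
      IsCoproductCocone X QX ιX → IsCoproductCocone Y QY ιY →
      (∀ i, ιX i ≫ uu = u i ≫ ιY i) → Mono uu

/-- The category `D` satisfies (Ab.5): it has all (small) coproducts and directed
(filtered) colimits of monomorphisms are monomorphisms (for abelian categories the
latter is equivalent to the exactness of directed colimits). -/
def Ab5Type (D : Type u) [Category.{v} D] : Prop :=
  HasCoproducts.{v} D ∧
  ∀ (J : Type v) [SmallCategory J] [IsFiltered J] (F G : J ⥤ D) (α : F ⟶ G),
    (∀ j, Mono (α.app j)) →
    ∀ (cF : Cocone F) (cG : Cocone G), IsColimit cF → IsColimit cG →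
      ∀ m : cF.pt ⟶ cG.pt, (∀ j, cF.ι.app j ≫ m = α.app j ≫ cG.ι.app j) → Mono m

/-- A ring `S` is left coherent: every finitely generated left ideal is finitely
presented as a left `S`-module. -/
def LeftCoherentRing (S : Type u) [Ring S] : Prop :=
  ∀ J : Submodule S S, J.FG → Module.FinitePresentation S J

/-- A ring `S` is right coherent: every finitely generated right ideal (i.e. finitely
generated left ideal of `Sᵐᵒᵖ`) is finitely presented as a right `S`-module. -/
def RightCoherentRing (S : Type u) [Ring S] : Prop :=
  ∀ J : Submodule Sᵐᵒᵖ Sᵐᵒᵖ, J.FG → Module.FinitePresentation Sᵐᵒᵖ J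

end Paper

/-!
Since `Gen(V)` is cogenerating, embed `A` into some `T ∈ Gen(V) ⊆ V^{⊥₁}`. The cokernel `T/A`
lies in `Gen(V) = Pres(V)`, so it is the target of an epimorphism `c` from an object of `Add(V)`
whose kernel lies in `Gen(V) ⊆ V^{⊥₁}`; hence every morphism `V ⟶ T/A` factors through `c`, and
so through the induced map `π : V^{(J)} ⟶ T/A`. Pulling back `0 → A → T → T/A → 0` along `π`
gives a universal extension: an extension of `V` by `A` pushes out to a split extension of `V`
by `T`, and the resulting morphism `V ⟶ T/A` lifts along `π`.

For the middle term `X` of a universal extension `0 → A → X → V^{(J)} → 0`, the sequence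
`Ext¹(V, A) → Ext¹(V, X) → Ext¹(V, V^{(J)})` is exact, its first map vanishes by universality and
its last term vanishes because `V^{(J)} ∈ Gen(V)`; so `Ext¹(V, X) = 0`. Exactness in the middle is
`IsShortExact.exists_extension_over`.
-/

namespace Paper

variable {C : Type u} [Category.{v} C]

section Generation

variable {B : Set C} {V : C}

lemma mem_genIn_of_epi {A A' : C} (hA : A ∈ genIn B V) (hA' : A' ∈ B) (f : A ⟶ A') [Epi f] :
    A' ∈ genIn B V :=
  let ⟨_, X, hX, p, _⟩ := hA
  ⟨hA', X, hX, p ≫ f, epi_comp p f⟩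

lemma mem_genIn_of_isCoproductIn {J : Type v} {P : C} {κ : ∀ _ : J, V ⟶ P}
    (hP : IsCoproductIn B (fun _ : J => V) P κ) : P ∈ genIn B V :=
  ⟨hP.memQ, P, ⟨hP.memQ, J, P, κ, hP, 𝟙 P, 𝟙 P, Category.id_comp _⟩, 𝟙 P, inferInstance⟩

end Generation

variable [Abelian C]

namespace IsShortExact

variable {A E B : C} {i : A ⟶ E} {p : E ⟶ B}

lemma w (h : IsShortExact i p) : i ≫ p = 0 := h.1

lemma mono (h : IsShortExact i p) : Mono i := h.2.mono_f

lemma epi (h : IsShortExact i p) : Epi p := h.2.epi_g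

lemma exists_lift (h : IsShortExact i p) {Z : C} (x : Z ⟶ E) (hx : x ≫ p = 0) :
    ∃ y : Z ⟶ A, y ≫ i = x :=
  have := h.mono
  ⟨h.2.exact.lift x hx, h.2.exact.lift_f x hx⟩

lemma exists_desc (h : IsShortExact i p) {Z : C} (x : E ⟶ Z) (hx : i ≫ x = 0) :
    ∃ y : B ⟶ Z, p ≫ y = x :=
  have := h.epi
  ⟨h.2.exact.desc x hx, h.2.exact.g_desc x hx⟩

lemma exists_section_of_retraction (h : IsShortExact i p) {r : E ⟶ A} (hr : i ≫ r = 𝟙 A) :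
    ∃ s : B ⟶ E, s ≫ p = 𝟙 B :=
  ⟨_, (ShortComplex.Splitting.ofExactOfRetraction _ h.2.exact r hr h.2.epi_g).s_g⟩

lemma exists_retraction_of_section (h : IsShortExact i p) {s : B ⟶ E} (hs : s ≫ p = 𝟙 B) :
    ∃ r : E ⟶ A, i ≫ r = 𝟙 A :=
  ⟨_, (ShortComplex.Splitting.ofExactOfSection _ h.2.exact s hs h.2.mono_f).f_r⟩

end IsShortExact

lemma isShortExact_of_lift {A E B : C} {i : A ⟶ E} {p : E ⟶ B} [Mono i] [Epi p]
    (hw : i ≫ p = 0) (hlift : ∀ {Z : C} (x : Z ⟶ E), x ≫ p = 0 → ∃ y : Z ⟶ A, y ≫ i = x) :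
    IsShortExact i p :=
  ⟨hw, .mk' ((ShortComplex.mk i p hw).exact_of_f_is_kernel <| KernelFork.IsLimit.ofι' i hw
    fun x hx => ⟨(hlift x hx).choose, (hlift x hx).choose_spec⟩) ‹_› ‹_›⟩

lemma isShortExact_of_desc {A E B : C} {i : A ⟶ E} {p : E ⟶ B} [Mono i] [Epi p]
    (hw : i ≫ p = 0) (hdesc : ∀ {Z : C} (x : E ⟶ Z), i ≫ x = 0 → ∃ y : B ⟶ Z, p ≫ y = x) :
    IsShortExact i p :=
  ⟨hw, .mk' ((ShortComplex.mk i p hw).exact_of_g_is_cokernel <| CokernelCofork.IsColimit.ofπ' p hw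
    fun x hx => ⟨(hdesc x hx).choose, (hdesc x hx).choose_spec⟩) ‹_› ‹_›⟩

lemma isShortExact_kernel_ι {E B : C} (c : E ⟶ B) [Epi c] : IsShortExact (kernel.ι c) c :=
  isShortExact_of_lift (kernel.condition c) fun x hx => ⟨kernel.lift c x hx, kernel.lift_ι c x hx⟩

lemma isShortExact_cokernel_π {A E : C} (m : A ⟶ E) [Mono m] : IsShortExact m (cokernel.π m) :=
  isShortExact_of_desc (cokernel.condition m) fun x hx =>
    ⟨cokernel.desc m x hx, cokernel.π_desc m x hx⟩

lemma IsShortExact.exists_pullback {K Y Q Z : C} {k : K ⟶ Y} {c : Y ⟶ Q} (h : IsShortExact k c)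
    (t : Z ⟶ Q) :
    ∃ u : K ⟶ pullback c t, u ≫ pullback.fst c t = k ∧ u ≫ pullback.snd c t = 0 ∧
      IsShortExact u (pullback.snd c t) := by
  have := h.mono
  have := h.epi
  let u : K ⟶ pullback c t := pullback.lift k 0 (by rw [h.w, zero_comp])
  have hu₁ : u ≫ pullback.fst c t = k := pullback.lift_fst _ _ _
  have hu₂ : u ≫ pullback.snd c t = 0 := pullback.lift_snd _ _ _
  have : Mono u := mono_of_mono_fac hu₁
  refine ⟨u, hu₁, hu₂, isShortExact_of_lift hu₂ fun x hx => ?_⟩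
  obtain ⟨y, hy⟩ := h.exists_lift (x ≫ pullback.fst c t)
    (by simp [pullback.condition, reassoc_of% hx])
  exact ⟨y, pullback.hom_ext (by simp [hu₁, hy]) (by simp [hu₂, hx])⟩

lemma IsShortExact.exists_pushout {A E B P : C} {i : A ⟶ E} {q : E ⟶ B} (h : IsShortExact i q)
    (p : A ⟶ P) :
    ∃ q' : pushout i p ⟶ B, pushout.inl i p ≫ q' = q ∧ pushout.inr i p ≫ q' = 0 ∧
      IsShortExact (pushout.inr i p) q' := by
  have := h.mono
  have := h.epi
  let q' : pushout i p ⟶ B := pushout.desc q 0 (by rw [h.w, comp_zero])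
  have hq₁ : pushout.inl i p ≫ q' = q := pushout.inl_desc _ _ _
  have hq₂ : pushout.inr i p ≫ q' = 0 := pushout.inr_desc _ _ _
  have : Epi q' := epi_of_epi_fac hq₁
  refine ⟨q', hq₁, hq₂, isShortExact_of_desc hq₂ fun x hx => ?_⟩
  obtain ⟨y, hy⟩ := h.exists_desc (pushout.inl i p ≫ x)
    (by rw [pushout.condition_assoc, hx, comp_zero])
  exact ⟨y, pushout.hom_ext (by simp [reassoc_of% hq₁, hy]) (by simp [reassoc_of% hq₂, hx])⟩

lemma IsShortExact.comp_pushout_inl {A X E P : C} {u : A ⟶ X} {p : X ⟶ P}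
    (h : IsShortExact u p) (i : X ⟶ E) [Mono i] :
    IsShortExact (u ≫ i) (pushout.inl i p) := by
  have := h.mono
  have := h.epi
  have hw : (u ≫ i) ≫ pushout.inl i p = 0 := by simp [pushout.condition, reassoc_of% h.w]
  refine ⟨hw, .mk' ?_ inferInstance inferInstance⟩
  rw [ShortComplex.exact_iff_epi_kernel_lift]
  have : Epi (kernel.lift p u h.w) := (ShortComplex.exact_iff_epi_kernel_lift _).1 h.2.exact
  have := Abelian.epi_kernel_map_of_isPushout (IsPushout.of_hasPushout i p).flip
  convert epi_comp (kernel.lift p u h.w)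
    (kernel.map p (pushout.inl i p) i (pushout.inr i p) pushout.condition.symm) using 2
  ext
  simp

namespace Ext1Zero

variable {V Y : C}

lemma exists_section (h : Ext1Zero V Y) {E : C} {i : Y ⟶ E} {p : E ⟶ V}
    (hip : IsShortExact i p) : ∃ s : V ⟶ E, s ≫ p = 𝟙 V :=
  let ⟨_, hr⟩ := h E trivial i p hip
  hip.exists_section_of_retraction hr

lemma exists_extend (h : Ext1Zero V Y) {A E : C} {i : A ⟶ E} {q : E ⟶ V}
    (hiq : IsShortExact i q) (m : A ⟶ Y) : ∃ ψ : E ⟶ Y, i ≫ ψ = m := by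
  obtain ⟨q', -, -, hq'⟩ := hiq.exists_pushout m
  obtain ⟨ρ, hρ⟩ := h _ trivial _ _ hq'
  exact ⟨pushout.inl i m ≫ ρ, by rw [pushout.condition_assoc, hρ, Category.comp_id]⟩

lemma surjective_comp (h : Ext1Zero V Y) {E Q : C} {k : Y ⟶ E} {c : E ⟶ Q}
    (hkc : IsShortExact k c) : Function.Surjective fun l : V ⟶ E => l ≫ c := by
  intro t
  obtain ⟨u, -, -, hu⟩ := hkc.exists_pullback t
  obtain ⟨s, hs⟩ := h.exists_section hu
  exact ⟨s ≫ pullback.fst c t, by simp [pullback.condition, reassoc_of% hs]⟩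

end Ext1Zero

lemma exists_universal_pullback {V A T Q W : C} {m : A ⟶ T} {e : T ⟶ Q}
    (hme : IsShortExact m e) (hT : Ext1Zero V T) (π : W ⟶ Q)
    (hπ : Function.Surjective fun l : V ⟶ W => l ≫ π) :
    ∃ u : A ⟶ pullback e π, IsShortExact u (pullback.snd e π) ∧
      ∀ {E : C} {i : A ⟶ E} {q : E ⟶ V}, IsShortExact i q →
        ∃ ψ : E ⟶ pullback e π, i ≫ ψ = u := by
  obtain ⟨u, hu₁, hu₂, hu⟩ := hme.exists_pullback π
  refine ⟨u, hu, fun {E i q} hiq => ?_⟩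
  obtain ⟨ψ, hψ⟩ := hT.exists_extend hiq m
  obtain ⟨t, ht⟩ := hiq.exists_desc (ψ ≫ e) (by rw [reassoc_of% hψ, hme.w])
  obtain ⟨l, rfl⟩ := hπ t
  refine ⟨pullback.lift ψ (q ≫ l) (by simpa using ht.symm), pullback.hom_ext ?_ ?_⟩
  · rw [Category.assoc, pullback.lift_fst, hψ, hu₁]
  · rw [Category.assoc, pullback.lift_snd, reassoc_of% hiq.w, zero_comp, hu₂]

lemma IsShortExact.exists_extension_over {A X P V E : C} {u : A ⟶ X} {p : X ⟶ P}
    (hup : IsShortExact u p) (hP : Ext1Zero V P) {i : X ⟶ E} {q : E ⟶ V}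
    (hiq : IsShortExact i q) :
    ∃ (E' : C) (j : A ⟶ E') (q' : E' ⟶ V) (φ : E' ⟶ E),
      IsShortExact j q' ∧ j ≫ φ = u ≫ i ∧ φ ≫ q = q' := by
  have := hiq.mono
  obtain ⟨q'', hq''₁, -, hq''⟩ := hiq.exists_pushout p
  obtain ⟨s, hs⟩ := hP.exists_section hq''
  obtain ⟨j, hj₁, -, hj⟩ := (hup.comp_pushout_inl i).exists_pullback s
  exact ⟨_, j, _, pullback.fst _ _, hj, hj₁,
    by rw [← hq''₁, pullback.condition_assoc, hs, Category.comp_id]⟩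

lemma ext1Zero_of_universal {A X P V : C} {u : A ⟶ X} {p : X ⟶ P}
    (hup : IsShortExact u p) (hP : Ext1Zero V P)
    (huniv : ∀ {E : C} {j : A ⟶ E} {q : E ⟶ V}, IsShortExact j q → ∃ ψ : E ⟶ X, j ≫ ψ = u) :
    Ext1Zero V X := by
  intro E _ i q hiq
  obtain ⟨E', j, q', φ, hj, hjφ, hφq⟩ := hup.exists_extension_over hP hiq
  obtain ⟨ψ, hψ⟩ := huniv hj
  obtain ⟨t, ht⟩ := hj.exists_desc (φ - ψ ≫ i) (by simp [hjφ, reassoc_of% hψ])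
  have := hj.epi
  refine hiq.exists_retraction_of_section (s := t) ?_
  rw [← cancel_epi q', reassoc_of% ht]
  simp [hφq, hiq.w]

lemma IsCoproductIn.option_biprod {V W : C} {I : Type v} {κ : ∀ _ : I, V ⟶ W}
    (h : IsCoproductIn Set.univ (fun _ : I => V) W κ) :
    IsCoproductIn Set.univ (fun _ : Option I => V) (W ⊞ V)
      (fun j => j.elim biprod.inr fun i => κ i ≫ biprod.inl) := by
  refine ⟨fun _ => trivial, trivial, fun Z _ g => ?_⟩
  obtain ⟨d, hd, hd_uniq⟩ := h.desc Z trivial fun i => g (some i)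
  refine ⟨biprod.desc d (g none), ?_, fun d' hd' => biprod.hom_ext' _ _ ?_ ?_⟩
  · rintro (_ | i)
    · exact biprod.inr_desc _ _
    · simpa using hd i
  · simpa using hd_uniq _ fun i => by simpa using hd' (some i)
  · simpa using hd' none

section Tilting

variable {B : Set C} {V : C}

lemma genIn_subset_rightPerp (hV : IsQuasiTiltingIn B V) : genIn B V ⊆ rightPerp B V := by
  rw [hV.2.2.2]
  exact Set.inter_subset_right

lemma rightPerp_eq_genIn (hV : IsTiltingIn B V) : rightPerp B V = genIn B V := by
  refine Set.Subset.antisymm (fun A hA => ?_) (genIn_subset_rightPerp hV.1)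
  obtain ⟨T, hT, f, hf⟩ := hV.2 A hA.1
  rw [hV.1.2.2.2]
  exact ⟨⟨hA.1, T, hT, f, hf⟩, hA⟩

end Tilting

lemma exists_isCoproductIn_surjective_comp {V Q : C} (hV : IsQuasiTiltingIn Set.univ V)
    (hQ : Q ∈ genIn Set.univ V) :
    ∃ (J : Type v) (_ : Nonempty J) (P : C) (κ : ∀ _ : J, V ⟶ P) (π : P ⟶ Q),
      IsCoproductIn Set.univ (fun _ : J => V) P κ ∧
        Function.Surjective fun l : V ⟶ P => l ≫ π := by
  rw [hV.2.2.1] at hQ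
  obtain ⟨-, P₁, hP₁, P₀, ⟨-, I, W, κ, hW, s, r, hsr⟩, f, c, hfc, hc, hexact⟩ := hQ
  have hK : Ext1Zero V (kernel c) := (genIn_subset_rightPerp hV
    ⟨trivial, P₁, hP₁, kernel.lift c f hfc, (ShortComplex.exact_iff_epi_kernel_lift _).1 hexact⟩).2
  have hc := hK.surjective_comp (isShortExact_kernel_ι c)
  -- the extra summand `V` only serves to make the index type nonempty
  refine ⟨Option I, ⟨none⟩, W ⊞ V, _, biprod.desc (r ≫ c) 0, hW.option_biprod, fun t => ?_⟩
  obtain ⟨l, rfl⟩ := hc t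
  exact ⟨l ≫ s ≫ biprod.inl, by simp [reassoc_of% hsr]⟩

lemma isExt1UniversalIn_of_isTiltingIn {V : C} (hV : IsTiltingIn Set.univ V) :
    IsExt1UniversalIn Set.univ V := by
  intro A _
  obtain ⟨T, hT, m, hm⟩ := hV.2 A trivial
  obtain ⟨J, hJ, P, κ, π, hP, hπ⟩ :=
    exists_isCoproductIn_surjective_comp hV.1 (mem_genIn_of_epi hT trivial (cokernel.π m))
  obtain ⟨u, hu, huniv⟩ := exists_universal_pullback (isShortExact_cokernel_π m)
    (genIn_subset_rightPerp hV.1 hT).2 π hπ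
  exact ⟨_, u, trivial, trivial, ⟨J, hJ, P, κ, _, hP, hu⟩, fun _ _ _ _ hiq => huniv hiq⟩

end Paper

namespace Stmt8

open Paper CategoryTheory CategoryTheory.Limits

variable {C : Type u} [Category.{v} C] [Abelian C]

theorem statement8 (V : C) (hV : IsTiltingIn (Set.univ : Set C) V) :
    -- `V` is `Ext¹`-universal
    IsExt1UniversalIn Set.univ V ∧
    -- `V^{⊥₁} = Gen(V)`
    rightPerp Set.univ V = genIn Set.univ V ∧
    -- the middle term of any universal extension of `V` lies in `V^{⊥₁}`
    (∀ (A X : C) (u : A ⟶ X), IsUniversalExtensionIn Set.univ V A X u →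
      X ∈ rightPerp Set.univ V) := by
  refine ⟨isExt1UniversalIn_of_isTiltingIn hV, rightPerp_eq_genIn hV, ?_⟩
  rintro A X u ⟨-, -, ⟨J, -, P, κ, p, hP, hup⟩, huniv⟩
  exact ⟨trivial, ext1Zero_of_universal hup
    (genIn_subset_rightPerp hV.1 (mem_genIn_of_isCoproductIn hP)).2
    fun hj => huniv _ trivial _ _ hj⟩

end Stmt8
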